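/- arXiv:1109.0591 — 7 statements merged into one kernel-verified Lean document; each statement's English description precedes it below -/
import Mathlib

section
/- Let F be a Čech 2-cochain on an open cover W of a space Z with values in ℤ^n, and define the 3-cochain C(F) with values in strictly upper triangular n×n integer matrices by C(F)_{λ0λ1λ2λ3}(z)_{ij} := F_{λ0λ1λ2}(z)_i · F_{λ0λ2λ3}(z)_j − F_{λ1λ2λ3}(z)_i · F_{λ0λ1λ3}(z)_j. Then the Čech differential of C(F) satisfies (∂̌ C(F))_{ij} = (F_i ∪ F_j) − (F_j ∪ F_i), where ∪ denotes the Čech cup product of the i-th and j-th component 2-cochains. -/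
/-!
A Čech 2-cocycle is determined by its values on simplices through a fixed vertex `a`:
`f x y w = f a y w - f a x w + f a x y`. Substituting this for every value not based at `a`
turns both sides of the identity into polynomials in the `a`-based values of the two
components, and these polynomials agree.
-/

section CechCocycle

variable {ι R : Type*}

def IsCechTwoCocycle [AddCommGroup R] (f : ι → ι → ι → R) : Prop :=
  ∀ a b c d : ι, f b c d - f a c d + f a b d - f a b c = 0

theorem IsCechTwoCocycle.eq_cone [AddCommGroup R] {f : ι → ι → ι → R}
    (hf : IsCechTwoCocycle f) (a x y w : ι) :
    f x y w = f a y w - f a x w + f a x y := by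
  have := hf a x y w
  rw [← sub_eq_zero, ← this]
  abel

/-- The Steenrod identity `∂̌ C = f ∪ g - g ∪ f` for the 3-cochain
`C_{abcd} = f_{abc} g_{acd} - f_{bcd} g_{abd}` built from two 2-cocycles. -/
theorem IsCechTwoCocycle.steenrod_coboundary [CommRing R] {f g : ι → ι → ι → R}
    (hf : IsCechTwoCocycle f) (hg : IsCechTwoCocycle g) (a b c d e : ι) :
    (f b c d * g b d e - f c d e * g b c e) - (f a c d * g a d e - f c d e * g a c e)
        + (f a b d * g a d e - f b d e * g a b e) - (f a b c * g a c e - f b c e * g a b e)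
        + (f a b c * g a c d - f b c d * g a b d)
      = f a b c * g c d e - g a b c * f c d e := by
  simp only [hf.eq_cone a b, hf.eq_cone a c, hg.eq_cone a b, hg.eq_cone a c]
  ring

end CechCocycle

theorem stmt_0 {ι Z : Type*} {n : ℕ}
    (F : ι → ι → ι → Z → Fin n → ℤ)
    -- F is a Čech 2-cocycle: ∂̌F = 0
    (hF : ∀ (a b c d : ι) (z : Z) (l : Fin n),
      F b c d z l - F a c d z l + F a b d z l - F a b c z l = 0)
    -- the 3-cochain C(F)
    (CF : ι → ι → ι → ι → Z → Fin n → Fin n → ℤ)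
    (hCF : ∀ (a b c d : ι) (z : Z) (i j : Fin n),
      CF a b c d z i j = F a b c z i * F a c d z j - F b c d z i * F a b d z j)
    (i j : Fin n) (a b c d e : ι) (z : Z) :
    -- (∂̌ C(F))_{abcde}(z)_{ij} = (F_i ∪ F_j)_{abcde}(z) - (F_j ∪ F_i)_{abcde}(z)
    CF b c d e z i j - CF a c d e z i j + CF a b d e z i j - CF a b c e z i j
        + CF a b c d z i j
      = F a b c z i * F c d e z j - F a b c z j * F c d e z i := by
  have hcocycle : ∀ l, IsCechTwoCocycle fun x y w => F x y w z l :=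
    fun l x y w v => hF x y w v z l
  simp only [hCF]
  exact (hcocycle i).steenrod_coboundary (hcocycle j) a b c d e
end

section
/- With the dimensionally reduced cochain complex C^k_F(W, ℤ) (triples of Čech cochains with values in ℤ, ℤ^n, and strictly upper triangular integer matrices M_n^u(ℤ)) and differential D_F(φ^{k0}, φ^{(k-1)1}, φ^{(k-2)2}) := (∂̌φ^{k0} + (−1)^{k+1} φ^{(k-1)1} ∪₁ F + (−1)^{k+1} φ^{(k-2)2} ∪₂ C(F), ∂̌φ^{(k-1)1} + (−1)^k φ^{(k-2)2} ∪₁ F, ∂̌φ^{(k-2)2}), one has D_F ∘ D_F = 0, given that F is a 2-cocycle with values in ℤ^n and ∂̌C(F)_{ij} = F_i ∪ F_j − F_j ∪ F_i. -/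
/-!
Every term of `D_F` is a front-face/back-face cup product, through a biadditive pairing, of a
cochain with the 2-cochain `F` or the 3-cochain `C(F)`, and the Čech differential is a graded
derivation for such products. Since `∂̌F = 0`, it commutes with `∪₁ F`; for `∪₂ C(F)` it leaves
the extra term `ψ ∪₂ ∂̌C(F) = ψ ∪₂ (F_i ∪ F_j − F_j ∪ F_i)`, which equals `(ψ ∪₁ F) ∪₁ F` and
cancels the term that `∪₁ F` produces from the middle component. With `∂̌ ∘ ∂̌ = 0` the signs
do the rest.
-/

/-- A Čech `k`-cochain on a cover indexed by `ι` of a space `Z`, with values in `A`,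
modelled as a totally defined function of a `(k+1)`-tuple of indices and a point. -/
abbrev Cochain (ι Z A : Type*) (k : ℕ) := (Fin (k + 1) → ι) → Z → A

/-- The Čech differential `(∂̌φ)_{λ₀…λ_{k+1}} = Σ_l (-1)^l φ_{λ₀…λ̂_l…λ_{k+1}}`. -/
def cechD {ι Z A : Type*} [AddCommGroup A] {k : ℕ} (φ : Cochain ι Z A k) :
    Cochain ι Z A (k + 1) :=
  fun σ z => ∑ l : Fin (k + 2), ((-1 : ℤ) ^ (l : ℕ)) • φ (σ ∘ l.succAbove) z

/-- The Steenrod cochain `C(F)_{λ₀λ₁λ₂λ₃}(z)_{ij}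
  = F_{λ₀λ₁λ₂}(z)_i F_{λ₀λ₂λ₃}(z)_j − F_{λ₁λ₂λ₃}(z)_i F_{λ₀λ₁λ₃}(z)_j`. -/
def CFm {ι Z : Type*} {n : ℕ} (F : ι → ι → ι → Z → Fin n → ℤ) :
    ι → ι → ι → ι → Z → Fin n → Fin n → ℤ :=
  fun a b c d z i j => F a b c z i * F a c d z j - F b c d z i * F a b d z j

/-- `φ ∪₁ F` for a ℤⁿ-valued `k`-cochain `φ`:
`(φ ∪₁ F)_{λ₀…λ_{k+2}}(z) = Σ_l φ_{λ₀…λ_k}(z)_l F_{λ_k λ_{k+1} λ_{k+2}}(z)_l`. -/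
def cup1v {ι Z : Type*} {n k : ℕ} (φ : Cochain ι Z (Fin n → ℤ) k)
    (F : ι → ι → ι → Z → Fin n → ℤ) : Cochain ι Z ℤ (k + 2) :=
  fun σ z => ∑ l : Fin n,
    φ (fun i : Fin (k + 1) => σ (Fin.castLE (by omega) i)) z l *
      F (σ ⟨k, by omega⟩) (σ ⟨k + 1, by omega⟩) (σ ⟨k + 2, by omega⟩) z l

/-- `ψ ∪₁ F` for a matrix-valued `k`-cochain `ψ`:
`(ψ ∪₁ F)_{λ₀…λ_{k+2}}(z)_l
  = Σ_{i<j} ψ_{λ₀…λ_k}(z)_{ij} (F_{λ_k λ_{k+1} λ_{k+2}}(z)_i (e_l)_j − (e_l)_i F(z)_j)`. -/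
def cup1m {ι Z : Type*} {n k : ℕ} (ψ : Cochain ι Z (Fin n → Fin n → ℤ) k)
    (F : ι → ι → ι → Z → Fin n → ℤ) : Cochain ι Z (Fin n → ℤ) (k + 2) :=
  fun σ z l => ∑ i : Fin n, ∑ j : Fin n,
    if i < j then
      ψ (fun i' : Fin (k + 1) => σ (Fin.castLE (by omega) i')) z i j *
        (F (σ ⟨k, by omega⟩) (σ ⟨k + 1, by omega⟩) (σ ⟨k + 2, by omega⟩) z i *
            (if l = j then 1 else 0)
          - (if l = i then 1 else 0) *
            F (σ ⟨k, by omega⟩) (σ ⟨k + 1, by omega⟩) (σ ⟨k + 2, by omega⟩) z j)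
    else 0

/-- `ψ ∪₂ C(F)` for a matrix-valued `k`-cochain `ψ`:
`(ψ ∪₂ C(F))_{λ₀…λ_{k+3}}(z) = Σ_{i<j} ψ_{λ₀…λ_k}(z)_{ij} C(F)_{λ_k…λ_{k+3}}(z)_{ij}`. -/
def cup2m {ι Z : Type*} {n k : ℕ} (ψ : Cochain ι Z (Fin n → Fin n → ℤ) k)
    (F : ι → ι → ι → Z → Fin n → ℤ) : Cochain ι Z ℤ (k + 3) :=
  fun σ z => ∑ i : Fin n, ∑ j : Fin n,
    if i < j then
      ψ (fun i' : Fin (k + 1) => σ (Fin.castLE (by omega) i')) z i j *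
        CFm F (σ ⟨k, by omega⟩) (σ ⟨k + 1, by omega⟩) (σ ⟨k + 2, by omega⟩)
          (σ ⟨k + 3, by omega⟩) z i j
    else 0

/-- The differential `D_F` of the dimensionally reduced complex with integer
coefficients, on a triple of total degree `K+2`
(components of Čech degrees `K+2`, `K+1`, `K`). -/
def DF {ι Z : Type*} {n : ℕ} (K : ℕ) (F : ι → ι → ι → Z → Fin n → ℤ)
    (t : Cochain ι Z ℤ (K + 2) × Cochain ι Z (Fin n → ℤ) (K + 1) ×
         Cochain ι Z (Fin n → Fin n → ℤ) K) :
    Cochain ι Z ℤ (K + 3) × Cochain ι Z (Fin n → ℤ) (K + 2) ×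
      Cochain ι Z (Fin n → Fin n → ℤ) (K + 1) :=
  (cechD t.1 + ((-1 : ℤ) ^ (K + 3)) • cup1v t.2.1 F
      + ((-1 : ℤ) ^ (K + 3)) • cup2m t.2.2 F,
    cechD t.2.1 + ((-1 : ℤ) ^ (K + 2)) • cup1m t.2.2 F,
    cechD t.2.2)

namespace Fin

theorem val_succAbove {n : ℕ} (p : Fin (n + 1)) (i : Fin n) :
    (p.succAbove i : ℕ) = if (i : ℕ) < p then (i : ℕ) else (i : ℕ) + 1 := by
  unfold succAbove
  split_ifs <;> simp_all [lt_def]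

end Fin

section CechDifferential

variable {ι Z A B C : Type*} [AddCommGroup A] [AddCommGroup B] [AddCommGroup C]

theorem cechD_add {k : ℕ} (φ φ' : Cochain ι Z A k) : cechD (φ + φ') = cechD φ + cechD φ' := by
  funext σ z
  simp [cechD, smul_add, Finset.sum_add_distrib]

theorem cechD_zsmul {k : ℕ} (c : ℤ) (φ : Cochain ι Z A k) : cechD (c • φ) = c • cechD φ := by
  funext σ z
  simp [cechD, Finset.smul_sum, smul_comm c]

/-- The faces `(j, i)` and `(j.succAbove i, i.predAbove j)` of the double sum remove the same two
vertices, with opposite signs. -/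
theorem cechD_cechD {k : ℕ} (φ : Cochain ι Z A k) : cechD (cechD φ) = 0 := by
  funext σ z
  simp only [cechD, Finset.smul_sum, smul_smul, ← pow_add, Pi.zero_apply]
  rw [← Finset.sum_product']
  refine Finset.sum_ninvolution (fun p => (p.1.succAbove p.2, p.2.predAbove p.1))
    (fun ⟨j, i⟩ => ?_) (fun ⟨j, i⟩ _ => ?_) (fun _ => Finset.mem_univ _) (fun ⟨j, i⟩ => ?_)
  · have hface : (σ ∘ j.succAbove) ∘ i.succAbove
        = (σ ∘ (j.succAbove i).succAbove) ∘ (i.predAbove j).succAbove :=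
      Fin.removeNth_removeNth_eq_swap σ i j
    have hsign : (-1 : ℤ) ^ ((j.succAbove i : ℕ) + (i.predAbove j : ℕ)) = -(-1) ^ ((j : ℕ) + i) :=
      Fin.neg_one_pow_succAbove_add_predAbove j i
    dsimp only
    rw [hface, hsign, neg_smul, add_neg_cancel]
  · simp [Fin.succAbove_ne]
  · simp [Fin.succAbove_succAbove_predAbove, Fin.predAbove_predAbove_succAbove]

/-- The degree `r` is a parameter so that the Leibniz rule `cechD_cupProd` needs no casts. -/
def cupProd (m : A →+ B →+ C) {p q r : ℕ} (h : p + q = r) (f : Cochain ι Z A p)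
    (g : Cochain ι Z B q) : Cochain ι Z C r :=
  fun σ z => m (f (fun i => σ (Fin.castLE (by omega) i)) z) (g (fun i => σ ⟨p + i, by omega⟩) z)

theorem cupProd_add_left (m : A →+ B →+ C) {p q r : ℕ} (h : p + q = r)
    (f f' : Cochain ι Z A p) (g : Cochain ι Z B q) :
    cupProd m h (f + f') g = cupProd m h f g + cupProd m h f' g := by
  funext σ z
  simp [cupProd]

theorem cupProd_zsmul_left (m : A →+ B →+ C) {p q r : ℕ} (h : p + q = r) (c : ℤ)
    (f : Cochain ι Z A p) (g : Cochain ι Z B q) :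
    cupProd m h (c • f) g = c • cupProd m h f g := by
  funext σ z
  simp [cupProd]

theorem cupProd_zero_right (m : A →+ B →+ C) {p q r : ℕ} (h : p + q = r)
    (f : Cochain ι Z A p) : cupProd m h f (0 : Cochain ι Z B q) = 0 := by
  funext σ z
  simp [cupProd]

/-- Faces `l ≤ p` of `σ` contribute to `∂̌f ∪ g`, faces `l ≥ p + 1` to `f ∪ ∂̌g`; the last face
of `∂̌f` and the first face of `∂̌g` are the same and cancel. -/
theorem cechD_cupProd (m : A →+ B →+ C) {p q r : ℕ} (h : p + q = r) (f : Cochain ι Z A p)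
    (g : Cochain ι Z B q) :
    cechD (cupProd m h f g) = cupProd m (by omega) (cechD f) g
      + ((-1 : ℤ) ^ p) • cupProd m (by omega) f (cechD g) := by
  subst h
  funext σ z
  simp only [cechD, cupProd, Pi.add_apply, Pi.smul_apply, map_sum, map_zsmul,
    AddMonoidHom.finsetSum_apply, AddMonoidHom.smul_apply, Function.comp_apply]
  rw [Fin.sum_univ_castSucc (n := p + 1), Fin.sum_univ_succ (n := q + 1),
    ← (finCongr (by omega : p + 1 + (q + 1) = p + q + 2)).sum_comp, Fin.sum_univ_add]
  have regroup : ∀ {S₁ S₂ A B X Y : C} {s : ℤ}, S₁ = A → S₂ = s • B → X + s • Y = 0 →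
      S₁ + S₂ = A + X + s • (Y + B) := by
    intro S₁ S₂ A B X Y s h₁ h₂ h
    rw [h₁, h₂, smul_add, ← add_assoc, add_assoc A, h, add_zero]
  refine regroup (Finset.sum_congr rfl fun i _ => ?_) ?_ ?_
  · simp only [Fin.val_castSucc, finCongr_apply, Fin.val_cast, Fin.val_castAdd]
    congr 4 <;> funext a <;> refine congrArg σ (Fin.ext ?_)
    · simp only [Fin.val_succAbove, Fin.val_castLE, Fin.val_cast, Fin.val_castAdd,
        Fin.val_castSucc]
    · simp only [Fin.val_succAbove, Fin.val_cast, Fin.val_castAdd]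
      split_ifs <;> omega
  · rw [Finset.smul_sum]
    refine Finset.sum_congr rfl fun j _ => ?_
    rw [smul_smul, ← pow_add]
    congr 4
    · simp; omega
    all_goals funext a; refine congrArg σ (Fin.ext ?_)
    all_goals simp only [Fin.val_succAbove, Fin.val_castLE, finCongr_apply, Fin.val_cast,
      Fin.val_natAdd, Fin.val_succ]; split_ifs <;> omega
  · have hfront : (fun i : Fin (p + 2) => σ (Fin.castLE (by omega) i))
          ∘ (Fin.last (p + 1)).succAbove = fun i => σ (Fin.castLE (by omega) i) := by
      funext a; refine congrArg σ (Fin.ext ?_); simp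
    have hback : (fun i : Fin (q + 2) => σ ⟨p + i, by omega⟩) ∘ Fin.succAbove 0
        = fun i : Fin (q + 1) => σ ⟨p + 1 + i, by omega⟩ := by
      funext a; refine congrArg σ (Fin.ext ?_); simp; omega
    rw [hfront, hback]
    simp [pow_succ]

end CechDifferential

section Pairings

variable {n : ℕ}

def cup1vHom : (Fin n → ℤ) →+ (Fin n → ℤ) →+ ℤ :=
  AddMonoidHom.mk' (fun a => AddMonoidHom.mk' (fun b => ∑ l, a l * b l)
    fun b b' => by simp only [Pi.add_apply, mul_add, Finset.sum_add_distrib])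
    fun a a' => by ext b; simp only [Pi.add_apply, add_mul, Finset.sum_add_distrib]; rfl

def cup1mHom : (Fin n → Fin n → ℤ) →+ (Fin n → ℤ) →+ (Fin n → ℤ) :=
  AddMonoidHom.mk' (fun a => AddMonoidHom.mk'
    (fun b l => ∑ i, ∑ j, if i < j then
      a i j * (b i * (if l = j then 1 else 0) - (if l = i then 1 else 0) * b j) else 0)
    fun b b' => by
      funext l
      simp only [Pi.add_apply, add_mul, mul_add, add_sub_add_comm, ite_add_zero,
        Finset.sum_add_distrib])
    fun a a' => by
      ext b l; simp only [Pi.add_apply, add_mul, ite_add_zero, Finset.sum_add_distrib]; rfl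

def cup2mHom : (Fin n → Fin n → ℤ) →+ (Fin n → Fin n → ℤ) →+ ℤ :=
  AddMonoidHom.mk' (fun a => AddMonoidHom.mk'
    (fun b => ∑ i, ∑ j, if i < j then a i j * b i j else 0)
    fun b b' => by simp only [Pi.add_apply, mul_add, ite_add_zero, Finset.sum_add_distrib])
    fun a a' => by
      ext b; simp only [Pi.add_apply, add_mul, ite_add_zero, Finset.sum_add_distrib]; rfl

theorem cup1vHom_cup1mHom (a : Fin n → Fin n → ℤ) (b c : Fin n → ℤ) :
    cup1vHom (cup1mHom a b) c = cup2mHom a (fun i j => b i * c j - b j * c i) := by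
  simp only [cup1vHom, cup2mHom, cup1mHom, AddMonoidHom.mk'_apply, Finset.sum_mul]
  rw [Finset.sum_comm]
  refine Finset.sum_congr rfl fun i _ => ?_
  rw [Finset.sum_comm]
  refine Finset.sum_congr rfl fun j _ => ?_
  split_ifs
  · simp [mul_sub, sub_mul, Finset.sum_sub_distrib]
    ring
  · simp

end Pairings

section CupWithF

variable {ι Z : Type*} {n : ℕ}

def asCochain (F : ι → ι → ι → Z → Fin n → ℤ) : Cochain ι Z (Fin n → ℤ) 2 :=
  fun τ z => F (τ 0) (τ 1) (τ 2) z

def steenrodCochain (F : ι → ι → ι → Z → Fin n → ℤ) : Cochain ι Z (Fin n → Fin n → ℤ) 3 :=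
  fun τ z => CFm F (τ 0) (τ 1) (τ 2) (τ 3) z

/-- `(F_i ∪ F_j − F_j ∪ F_i)`, as a matrix-valued 4-cochain. -/
def cupCommutator (F : ι → ι → ι → Z → Fin n → ℤ) : Cochain ι Z (Fin n → Fin n → ℤ) 4 :=
  fun τ z i j => F (τ 0) (τ 1) (τ 2) z i * F (τ 2) (τ 3) (τ 4) z j
    - F (τ 0) (τ 1) (τ 2) z j * F (τ 2) (τ 3) (τ 4) z i

variable {F : ι → ι → ι → Z → Fin n → ℤ}

theorem cechD_asCochain
    (hF : ∀ (a b c d : ι) (z : Z) (l : Fin n),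
      F b c d z l - F a c d z l + F a b d z l - F a b c z l = 0) :
    cechD (asCochain F) = 0 := by
  funext τ z l
  simp +decide [cechD, asCochain, Fin.sum_univ_four, Fin.succAbove]
  linear_combination hF (τ 0) (τ 1) (τ 2) (τ 3) z l

theorem cechD_steenrodCochain
    (hCF : ∀ (a b c d e : ι) (z : Z) (i j : Fin n),
      CFm F b c d e z i j - CFm F a c d e z i j + CFm F a b d e z i j
          - CFm F a b c e z i j + CFm F a b c d z i j
        = F a b c z i * F c d e z j - F a b c z j * F c d e z i) :
    cechD (steenrodCochain F) = cupCommutator F := by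
  funext τ z i j
  simp +decide [cechD, steenrodCochain, cupCommutator, Fin.sum_univ_five, Fin.succAbove]
  linear_combination hCF (τ 0) (τ 1) (τ 2) (τ 3) (τ 4) z i j

theorem cup1v_eq_cupProd {k : ℕ} (φ : Cochain ι Z (Fin n → ℤ) k) :
    cup1v φ F = cupProd cup1vHom rfl φ (asCochain F) := rfl

theorem cup1m_eq_cupProd {k : ℕ} (ψ : Cochain ι Z (Fin n → Fin n → ℤ) k) :
    cup1m ψ F = cupProd cup1mHom rfl ψ (asCochain F) := rfl

theorem cup2m_eq_cupProd {k : ℕ} (ψ : Cochain ι Z (Fin n → Fin n → ℤ) k) :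
    cup2m ψ F = cupProd cup2mHom rfl ψ (steenrodCochain F) := rfl

theorem cup1v_cup1m {k : ℕ} (ψ : Cochain ι Z (Fin n → Fin n → ℤ) k) :
    cup1v (cup1m ψ F) F = cupProd cup2mHom rfl ψ (cupCommutator F) := by
  funext σ z
  exact cup1vHom_cup1mHom _ _ _

theorem cup1v_add {k : ℕ} (φ φ' : Cochain ι Z (Fin n → ℤ) k) :
    cup1v (φ + φ') F = cup1v φ F + cup1v φ' F :=
  cupProd_add_left cup1vHom rfl φ φ' (asCochain F)

theorem cup1v_zsmul {k : ℕ} (c : ℤ) (φ : Cochain ι Z (Fin n → ℤ) k) :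
    cup1v (c • φ) F = c • cup1v φ F :=
  cupProd_zsmul_left cup1vHom rfl c φ (asCochain F)

theorem cechD_cup1v
    (hF : ∀ (a b c d : ι) (z : Z) (l : Fin n),
      F b c d z l - F a c d z l + F a b d z l - F a b c z l = 0)
    {k : ℕ} (φ : Cochain ι Z (Fin n → ℤ) k) :
    cechD (cup1v φ F) = cup1v (cechD φ) F := by
  rw [cup1v_eq_cupProd, cechD_cupProd, cechD_asCochain hF, cupProd_zero_right, smul_zero,
    add_zero]
  rfl

theorem cechD_cup1m
    (hF : ∀ (a b c d : ι) (z : Z) (l : Fin n),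
      F b c d z l - F a c d z l + F a b d z l - F a b c z l = 0)
    {k : ℕ} (ψ : Cochain ι Z (Fin n → Fin n → ℤ) k) :
    cechD (cup1m ψ F) = cup1m (cechD ψ) F := by
  rw [cup1m_eq_cupProd, cechD_cupProd, cechD_asCochain hF, cupProd_zero_right, smul_zero,
    add_zero]
  rfl

theorem cechD_cup2m
    (hCF : ∀ (a b c d e : ι) (z : Z) (i j : Fin n),
      CFm F b c d e z i j - CFm F a c d e z i j + CFm F a b d e z i j
          - CFm F a b c e z i j + CFm F a b c d z i j
        = F a b c z i * F c d e z j - F a b c z j * F c d e z i)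
    {k : ℕ} (ψ : Cochain ι Z (Fin n → Fin n → ℤ) k) :
    cechD (cup2m ψ F) = cup2m (cechD ψ) F + ((-1 : ℤ) ^ k) • cup1v (cup1m ψ F) F := by
  rw [cup2m_eq_cupProd, cechD_cupProd, cechD_steenrodCochain hCF, cup1v_cup1m]
  rfl

end CupWithF

theorem stmt_1 {ι Z : Type*} {n : ℕ} (K : ℕ)
    (F : ι → ι → ι → Z → Fin n → ℤ)
    (hF : ∀ (a b c d : ι) (z : Z) (l : Fin n),
      F b c d z l - F a c d z l + F a b d z l - F a b c z l = 0)
    (hCF : ∀ (a b c d e : ι) (z : Z) (i j : Fin n),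
      CFm F b c d e z i j - CFm F a c d e z i j + CFm F a b d e z i j
          - CFm F a b c e z i j + CFm F a b c d z i j
        = F a b c z i * F c d e z j - F a b c z j * F c d e z i)
    (t : Cochain ι Z ℤ (K + 2) × Cochain ι Z (Fin n → ℤ) (K + 1) ×
         Cochain ι Z (Fin n → Fin n → ℤ) K) :
    DF (K + 1) F (DF K F t) = 0 := by
  obtain ⟨φ₀, φ₁, φ₂⟩ := t
  refine Prod.ext ?_ (Prod.ext ?_ ?_)
  · change cechD (cechD φ₀ + (-1 : ℤ) ^ (K + 3) • cup1v φ₁ F + (-1 : ℤ) ^ (K + 3) • cup2m φ₂ F)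
        + (-1 : ℤ) ^ (K + 4) • cup1v (cechD φ₁ + (-1 : ℤ) ^ (K + 2) • cup1m φ₂ F) F
        + (-1 : ℤ) ^ (K + 4) • cup2m (cechD φ₂) F = 0
    rw [cechD_add, cechD_add, cechD_zsmul, cechD_zsmul, cechD_cechD, cechD_cup1v hF,
      cechD_cup2m hCF, cup1v_add, cup1v_zsmul]
    module
  · change cechD (cechD φ₁ + (-1 : ℤ) ^ (K + 2) • cup1m φ₂ F)
        + (-1 : ℤ) ^ (K + 3) • cup1m (cechD φ₂) F = 0
    rw [cechD_add, cechD_zsmul, cechD_cechD, cechD_cup1m hF]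
    module
  · exact cechD_cechD φ₂
end

section
/- Suppose w is a unitary in U(H), and u^m, v^m (m ∈ ℤ^n) are families of unitaries in U(H) such that Ad(w u^m) = Ad(v^m w) for all m ∈ ℤ^n, and such that m ↦ Ad(u^m) and m ↦ Ad(v^m) are homomorphisms ℤ^n → PU(H), with u^{m+m'} = c(m,m') u^m u^{m'} and v^{m+m'} = c'(m,m') v^m v^{m'} for central scalars c, c'. If moreover any two of u^{e_i} commute up to the same scalars as the corresponding v^{e_i} (i.e., the commutation scalars f_{ij} agree), and u, v are defined multiplicatively from u^{e_i}, v^{e_i} as u^m = (u^{e_1})^{m_1}⋯(u^{e_n})^{m_n}, then the map m ↦ v^m w (u^m)^* w^* takes values in the scalars 𝕋·1 and is a group homomorphism from ℤ^n to 𝕋. -/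
/-!
Because `u` and `v` obey the same commutation scalars, reordering `u^(m+m')` into `u^m u^(m')`
costs exactly the same central factor `c(m, m')` as reordering `v^(m+m')`: it is produced only
by moving generators past each other. Writing `φ(m) = v^m w (u^m)⁻¹ w⁻¹`, the factor `c` cancels
in `φ(m+m') = c v^m v^(m') w (u^(m'))⁻¹ (u^m)⁻¹ c⁻¹ w⁻¹ = v^m φ(m') w (u^m)⁻¹ w⁻¹`, and
centrality of `φ(m')` turns this into `φ(m) φ(m')`.
-/

open Subgroup
open scoped IsMulCommutative

section

variable {G : Type*} [Group G]

theorem semiconjBy_mul_iff_semiconjBy_inv_mul {a b z : G} :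
    SemiconjBy b a (z * a) ↔ SemiconjBy a b (z⁻¹ * b) := by
  simp only [SemiconjBy, mul_assoc, eq_inv_mul_iff_mul_eq, eq_comm]

theorem SemiconjBy.zpow_right_of_mem_center {a b z : G} (hz : z ∈ center G)
    (h : SemiconjBy b a (z * a)) (p : ℤ) : SemiconjBy b (a ^ p) (z ^ p * a ^ p) := by
  simpa only [(hz.comm a).mul_zpow] using h.zpow_right p

theorem SemiconjBy.zpow_zpow_of_mem_center {a b z : G} (hz : z ∈ center G)
    (h : SemiconjBy b a (z * a)) (p q : ℤ) :
    SemiconjBy (b ^ q) (a ^ p) (z ^ (p * q) * a ^ p) := by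
  have hb : SemiconjBy (b ^ q) a (z ^ q * a) := by
    rw [semiconjBy_mul_iff_semiconjBy_inv_mul, ← inv_zpow]
    exact (semiconjBy_mul_iff_semiconjBy_inv_mul.mp h).zpow_right_of_mem_center
      (inv_mem hz) q
  simpa only [mul_comm p q, zpow_mul] using hb.zpow_right_of_mem_center (zpow_mem hz q) p

theorem SemiconjBy.list_ofFn_prod_left_of_mem_center {n : ℕ} {g : Fin n → G} {a : G}
    {z : Fin n → center G} (h : ∀ i, SemiconjBy (g i) a (z i * a)) :
    SemiconjBy (List.ofFn g).prod a ((∏ i, z i : center G) * a) := by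
  induction n with
  | zero => simp
  | succ n ih =>
    rw [List.ofFn_succ, List.prod_cons, Fin.prod_univ_succ, coe_mul, mul_assoc,
      (z 0).2.left_comm]
    exact (SemiconjBy.mul_right ((∏ i, z i.succ : center G).2.comm (g 0)).symm (h 0)).mul_left
      (ih fun i => h i.succ)

def orderedMonomial {n : ℕ} (g : Fin n → G) (m : Fin n → ℤ) : G :=
  (List.ofFn fun i => g i ^ m i).prod

theorem orderedMonomial_succ {n : ℕ} (g : Fin (n + 1) → G) (m : Fin (n + 1) → ℤ) :
    orderedMonomial g m = g 0 ^ m 0 * orderedMonomial (Fin.tail g) (Fin.tail m) := by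
  rw [orderedMonomial, List.ofFn_succ, List.prod_cons]
  rfl

theorem exists_orderedMonomial_add {n : ℕ} (f : Fin n → Fin n → center G) (m m' : Fin n → ℤ) :
    ∃ c : center G, ∀ g : Fin n → G, (∀ i j, i < j → g j * g i = f i j * (g i * g j)) →
      orderedMonomial g (m + m') = c * (orderedMonomial g m * orderedMonomial g m') := by
  induction n with
  | zero => exact ⟨1, fun g _ => by simp [orderedMonomial]⟩
  | succ n ih =>
    obtain ⟨c, hc⟩ := ih (fun i j => f i.succ j.succ) (Fin.tail m) (Fin.tail m')
    -- the price of moving `g 0 ^ m' 0` leftwards past every later factor of `g ^ m`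
    let z : center G := ∏ i : Fin n, f 0 i.succ ^ (m' 0 * m i.succ)
    refine ⟨c * z⁻¹, fun g hg => ?_⟩
    have hswap : SemiconjBy (orderedMonomial (Fin.tail g) (Fin.tail m)) (g 0 ^ m' 0)
        (z * g 0 ^ m' 0) := by
      refine SemiconjBy.list_ofFn_prod_left_of_mem_center fun i => ?_
      rw [coe_zpow]
      refine SemiconjBy.zpow_zpow_of_mem_center (f 0 i.succ).2 ?_ _ _
      exact (hg 0 i.succ i.succ_pos).trans (mul_assoc _ _ _).symm
    have hrel : ∀ i j : Fin n, i < j →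
        Fin.tail g j * Fin.tail g i = f i.succ j.succ * (Fin.tail g i * Fin.tail g j) :=
      fun i j hij => hg _ _ (Fin.succ_lt_succ_iff.mpr hij)
    rw [orderedMonomial_succ, orderedMonomial_succ g m, orderedMonomial_succ g m', Pi.add_apply,
      zpow_add, show Fin.tail (m + m') = Fin.tail m + Fin.tail m' from rfl, hc _ hrel]
    set R := orderedMonomial (Fin.tail g) (Fin.tail m)
    set R' := orderedMonomial (Fin.tail g) (Fin.tail m')
    have hmove : g 0 ^ m 0 * R * (g 0 ^ m' 0 * R') = z * (g 0 ^ m 0 * g 0 ^ m' 0 * (R * R')) :=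
      calc g 0 ^ m 0 * R * (g 0 ^ m' 0 * R')
          = g 0 ^ m 0 * (z * (g 0 ^ m' 0 * R * R')) := by
            rw [mul_assoc (g 0 ^ m 0), ← mul_assoc R, hswap.eq]
            group
        _ = z * (g 0 ^ m 0 * g 0 ^ m' 0 * (R * R')) := by
            rw [← z.2.left_comm]
            group
    rw [hmove, coe_mul, coe_inv, ← c.2.left_comm]
    group

def conjDefect (w x y : G) : G := x * w * y⁻¹ * w⁻¹

theorem conjDefect_mul_of_mem_center {c w x x' y y' : G} (hc : c ∈ center G)
    (h' : conjDefect w x' y' ∈ center G) :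
    conjDefect w (c * (x * x')) (c * (y * y')) = conjDefect w x y * conjDefect w x' y' := by
  unfold conjDefect at *
  calc c * (x * x') * w * (c * (y * y'))⁻¹ * w⁻¹
      = c * (x * (x' * w * y'⁻¹ * w⁻¹) * w * y⁻¹) * c⁻¹ * w⁻¹ := by group
    _ = x * (x' * w * y'⁻¹ * w⁻¹) * w * y⁻¹ * w⁻¹ := by rw [(hc.comm _).eq]; group
    _ = (x' * w * y'⁻¹ * w⁻¹) * (x * w * y⁻¹ * w⁻¹) := by rw [← (h'.comm x).eq]; group
    _ = (x * w * y⁻¹ * w⁻¹) * (x' * w * y'⁻¹ * w⁻¹) := (h'.comm _).eq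

end

theorem stmt_6 {G : Type*} [Group G] {n : ℕ} (u v : Fin n → G) (w : G)
    (f : Fin n → Fin n → Subgroup.center G)
    (hu : ∀ i j : Fin n, i < j → u j * u i = (f i j : G) * (u i * u j))
    (hv : ∀ i j : Fin n, i < j → v j * v i = (f i j : G) * (v i * v j))
    (U V : (Fin n → ℤ) → G)
    (hU : ∀ m, U m = (List.ofFn fun i => u i ^ m i).prod)
    (hV : ∀ m, V m = (List.ofFn fun i => v i ^ m i).prod)
    (hAd : ∀ m, w * U m * (V m * w)⁻¹ ∈ Subgroup.center G) :
    (∀ m, V m * w * (U m)⁻¹ * w⁻¹ ∈ Subgroup.center G) ∧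
    (∀ m m', V (m + m') * w * (U (m + m'))⁻¹ * w⁻¹
      = (V m * w * (U m)⁻¹ * w⁻¹) * (V m' * w * (U m')⁻¹ * w⁻¹)) := by
  have hdefect : ∀ m, conjDefect w (V m) (U m) ∈ center G := fun m => by
    convert inv_mem (hAd m) using 1
    unfold conjDefect
    group
  refine ⟨hdefect, fun m m' => ?_⟩
  obtain ⟨c, hc⟩ := exists_orderedMonomial_add f m m'
  have hUc : U (m + m') = c * (U m * U m') := by rw [hU, hU, hU]; exact hc u hu
  have hVc : V (m + m') = c * (V m * V m') := by rw [hV, hV, hV]; exact hc v hv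
  rw [hUc, hVc]
  exact conjDefect_mul_of_mem_center c.2 (hdefect m')
end

section
/- Let s be a ℝ^n-valued Čech 1-cochain on a cover {W_λ} with s_{λλ} = 0, and g: Z → M_n^u(ℝ) continuous. Define the 2-cochain φ^{20}_{λ0λ1λ2}(z) := [Σ_{i<j} g(z)_{ij}(s_{λ0λ1}(z)_i s_{λ1λ2}(z)_j − (∂̌s)_{λ0λ1λ2}(z)_i s_{λ0λ2}(z)_j)]_{ℝ/ℤ}. Then the Čech differential ∂̌φ^{20} on quadruple overlaps equals [Σ_{i<j} g(z)_{ij}((∂̌s)_{λ0λ1λ2}(z)_i (∂̌s)_{λ0λ2λ3}(z)_j − (∂̌s)_{λ1λ2λ3}(z)_i (∂̌s)_{λ0λ1λ3}(z)_j + (∂̌s)_{λ1λ2λ3}(z)_i s_{λ0λ1}(z)_j − s_{λ0λ1}(z)_i (∂̌s)_{λ1λ2λ3}(z)_j)]_{ℝ/ℤ}. -/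
/-! Both sides are images in `ℝ/ℤ` of sums `Σ_{i<j} g_{ij} e_{ij}` that are additive in the
coefficients `e`, so it suffices to compare coefficients for each pair `(i, j)`. There the claim
is a polynomial identity between the `i`-th and `j`-th components of `s`, once every `F` is
expanded as the Čech coboundary of `s`. -/

section StrictUpperSum

variable {κ R : Type*} [Fintype κ] [LT κ] [DecidableRel (α := κ) (· < ·)]
  [NonUnitalNonAssocSemiring R]

def strictUpperSum (g : Matrix κ κ R) : (κ → κ → R) →+ R where
  toFun e := ∑ i, ∑ j, if i < j then g i j * e i j else 0
  map_zero' := by simp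
  map_add' e e' := by
    simp only [Pi.add_apply, mul_add, ite_add_zero, Finset.sum_add_distrib]

theorem strictUpperSum_apply (g : Matrix κ κ R) (e : κ → κ → R) :
    strictUpperSum g e = ∑ i, ∑ j, if i < j then g i j * e i j else 0 :=
  rfl

end StrictUpperSum

section CechCoboundary

variable {ι R : Type*} [CommRing R]

def cechCoboundary (x : ι → ι → R) (a b c : ι) : R :=
  x b c - x a c + x a b

theorem cechCoboundary_cupTerm (x y : ι → ι → R) (a b c d : ι) :
    let δx := cechCoboundary x
    let δy := cechCoboundary y
    (x b c * y c d - δx b c d * y b d) - (x a c * y c d - δx a c d * y a d)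
        + (x a b * y b d - δx a b d * y a d) - (x a b * y b c - δx a b c * y a c) =
      δx a b c * δy a c d - δx b c d * δy a b d + δx b c d * y a b - x a b * δy b c d := by
  simp only [cechCoboundary]
  ring

end CechCoboundary

theorem stmt_9_general {ι Z : Type*} {n : ℕ}
    (s : ι → ι → Z → Fin n → ℝ)
    (g : Z → Matrix (Fin n) (Fin n) ℝ)
    (F : ι → ι → ι → Z → Fin n → ℝ)
    (hF : ∀ (a b c : ι) (z : Z) (l : Fin n),
      F a b c z l = s b c z l - s a c z l + s a b z l)
    (φ : ι → ι → ι → Z → AddCircle (1 : ℝ))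
    (hφ : ∀ (a b c : ι) (z : Z), φ a b c z =
      ((∑ i : Fin n, ∑ j : Fin n, if i < j then g z i j *
          (s a b z i * s b c z j - F a b c z i * s a c z j) else 0 : ℝ) :
        AddCircle (1 : ℝ)))
    (a b c d : ι) (z : Z) :
    φ b c d z - φ a c d z + φ a b d z - φ a b c z =
      ((∑ i : Fin n, ∑ j : Fin n, if i < j then g z i j *
          (F a b c z i * F a c d z j - F b c d z i * F a b d z j
            + F b c d z i * s a b z j - s a b z i * F b c d z j) else 0 : ℝ) :
        AddCircle (1 : ℝ)) := by
  simp only [hφ, ← strictUpperSum_apply, ← AddCircle.coe_sub, ← AddCircle.coe_add,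
    ← map_sub, ← map_add]
  congr 2
  funext i j
  have hF' (a b c : ι) (l : Fin n) :
      F a b c z l = cechCoboundary (fun a b => s a b z l) a b c :=
    hF a b c z l
  simp only [hF']
  exact cechCoboundary_cupTerm (fun a b => s a b z i) (fun a b => s a b z j) a b c d

theorem stmt_9 {ι Z : Type*} [TopologicalSpace Z] {n : ℕ}
    (s : ι → ι → Z → Fin n → ℝ)
    (hs0 : ∀ (a : ι) (z : Z), s a a z = 0)
    (hscont : ∀ a b : ι, Continuous (s a b))
    (g : Z → Matrix (Fin n) (Fin n) ℝ) (hgcont : Continuous g)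
    (hgu : ∀ (z : Z) (i j : Fin n), ¬ i < j → g z i j = 0)
    (F : ι → ι → ι → Z → Fin n → ℝ)
    (hF : ∀ (a b c : ι) (z : Z) (l : Fin n),
      F a b c z l = s b c z l - s a c z l + s a b z l)
    (φ : ι → ι → ι → Z → AddCircle (1 : ℝ))
    (hφ : ∀ (a b c : ι) (z : Z), φ a b c z =
      ((∑ i : Fin n, ∑ j : Fin n, if i < j then g z i j *
          (s a b z i * s b c z j - F a b c z i * s a c z j) else 0 : ℝ) :
        AddCircle (1 : ℝ)))
    (a b c d : ι) (z : Z) :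
    φ b c d z - φ a c d z + φ a b d z - φ a b c z =
      ((∑ i : Fin n, ∑ j : Fin n, if i < j then g z i j *
          (F a b c z i * F a c d z j - F b c d z i * F a b d z j
            + F b c d z i * s a b z j - s a b z i * F b c d z j) else 0 : ℝ) :
        AddCircle (1 : ℝ)) :=
  stmt_9_general s g F hF φ hφ a b c d z
end

section
/- Let s be an ℝ^n-valued Čech 1-cochain with F := ∂̌s integer-valued (F ∈ Ž²(W, ℤ^n)), and g: Z → M_n^u(ℝ) continuous. Define the triple φ(g) = (φ^{20}, φ^{11}, φ^{02}) with φ^{02}_{λ0}(z)_{ij} := [g(z)_{ij}]_{ℝ/ℤ}, φ^{11}_{λ0λ1}(m,z) := [Σ_{i<j} g(z)_{ij}(m_i s_{λ0λ1}(z)_j − s_{λ0λ1}(z)_i m_j)]_{ℝ/ℤ}, and φ^{20}_{λ0λ1λ2}(z) := [Σ_{i<j} g(z)_{ij}(s_{λ0λ1}(z)_i s_{λ1λ2}(z)_j − F_{λ0λ1λ2}(z)_i s_{λ0λ2}(z)_j)]_{ℝ/ℤ}. Then φ(g) is a cocycle in the dimensionally reduced complex: D_F(φ^{20}, φ^{11},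 φ^{02}) = 0. -/
/-!
With `B x y := ∑_{i<j} g_{ij} x_i y_j`, the bilinear form of the strictly upper triangular part
of `g`, every component of `φ(g)` is an ℝ-valued expression in `B`, `s` and `F`: the integrand
of `φ^{11}` is `B(m, s) - B(s, m)` and that of `φ^{20}` is `B(s_{λ0λ1}, s_{λ1λ2}) - B(F, s_{λ0λ2})`.
After substituting `F = ∂̌s`, the components of `D_F φ(g)` vanish already in ℝ, by bilinearity
of `B` alone; and `φ^{02}` does not depend on `λ0`.
-/

open Finset

section Bilinear

variable {ι R M N : Type*} [CommSemiring R] [AddCommGroup M] [Module R M] [AddCommGroup N]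
  [Module R N] (B : M →ₗ[R] M →ₗ[R] N) (s : ι → ι → M) (F : ι → ι → ι → M)

theorem bilin_cocycle_two_one (hF : ∀ a b c, F a b c = s b c - s a c + s a b)
    (m : M) (a b c : ι) :
    (B m (s b c) - B (s b c) m) - (B m (s a c) - B (s a c) m) + (B m (s a b) - B (s a b) m)
      + (B (F a b c) m - B m (F a b c)) = 0 := by
  simp only [hF, map_add, map_sub, LinearMap.add_apply, LinearMap.sub_apply]
  abel

theorem bilin_cocycle_three_zero (hF : ∀ a b c, F a b c = s b c - s a c + s a b)
    (a b c d : ι) :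
    (B (s b c) (s c d) - B (F b c d) (s b d)) - (B (s a c) (s c d) - B (F a c d) (s a d))
      + (B (s a b) (s b d) - B (F a b d) (s a d)) - (B (s a b) (s b c) - B (F a b c) (s a c))
      - (B (F b c d) (s a b) - B (s a b) (F b c d))
      - (B (F a b c) (F a c d) - B (F b c d) (F a b d)) = 0 := by
  simp only [hF, map_add, map_sub, LinearMap.add_apply, LinearMap.sub_apply]
  abel

end Bilinear

section StrictUpper

variable {κ R : Type*} [Fintype κ] [LT κ] [DecidableRel (α := κ) (· < ·)] [CommRing R]

def Matrix.strictUpper (g : Matrix κ κ R) : Matrix κ κ R :=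
  Matrix.of fun i j => if i < j then g i j else 0

theorem Matrix.sum_ite_lt_mul_sub [DecidableEq κ] (g : Matrix κ κ R) (x y u v : κ → R) :
    ∑ i, ∑ j, (if i < j then g i j * (x i * y j - u i * v j) else 0) =
      Matrix.toLinearMap₂' R g.strictUpper x y - Matrix.toLinearMap₂' R g.strictUpper u v := by
  simp only [Matrix.toLinearMap₂'_apply, ← sum_sub_distrib, strictUpper, Matrix.of_apply,
    smul_eq_mul]
  refine sum_congr rfl fun i _ => sum_congr rfl fun j _ => ?_
  split_ifs <;> ring

end StrictUpper

theorem stmt_10_general {ι Z : Type*} {n : ℕ}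
    (s : ι → ι → Z → Fin n → ℝ)
    (g : Z → Matrix (Fin n) (Fin n) ℝ)
    -- F = ∂̌s takes values in ℤⁿ
    (F : ι → ι → ι → Z → Fin n → ℤ)
    (hF : ∀ (a b c : ι) (z : Z) (l : Fin n),
      (F a b c z l : ℝ) = s b c z l - s a c z l + s a b z l)
    (φ20 : ι → ι → ι → Z → AddCircle (1 : ℝ))
    (hφ20 : ∀ (a b c : ι) (z : Z), φ20 a b c z =
      ((∑ i : Fin n, ∑ j : Fin n, if i < j then g z i j *
          (s a b z i * s b c z j - (F a b c z i : ℝ) * s a c z j) else 0 : ℝ) :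
        AddCircle (1 : ℝ)))
    (φ11 : ι → ι → (Fin n → ℤ) → Z → AddCircle (1 : ℝ))
    (hφ11 : ∀ (a b : ι) (m : Fin n → ℤ) (z : Z), φ11 a b m z =
      ((∑ i : Fin n, ∑ j : Fin n, if i < j then g z i j *
          ((m i : ℝ) * s a b z j - s a b z i * (m j : ℝ)) else 0 : ℝ) :
        AddCircle (1 : ℝ)))
    (φ02 : ι → Z → Matrix (Fin n) (Fin n) (AddCircle (1 : ℝ)))
    (hφ02 : ∀ (a : ι) (z : Z) (i j : Fin n),
      φ02 a z i j = ((g z i j : ℝ) : AddCircle (1 : ℝ))) :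
    -- degree (1,2) component of D_F φ(g): ∂̌φ^{02} = 0
    (∀ (a b : ι) (z : Z) (i j : Fin n), φ02 b z i j - φ02 a z i j = 0) ∧
    -- degree (2,1) component: ∂̌φ^{11} + φ^{02} ∪₁ F = 0
    (∀ (a b c : ι) (m : Fin n → ℤ) (z : Z),
      φ11 b c m z - φ11 a c m z + φ11 a b m z
        + ((∑ i : Fin n, ∑ j : Fin n, if i < j then g z i j *
            ((F a b c z i : ℝ) * (m j : ℝ) - (m i : ℝ) * (F a b c z j : ℝ))
            else 0 : ℝ) : AddCircle (1 : ℝ)) = 0) ∧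
    -- degree (3,0) component: ∂̌φ^{20} − φ^{11} ∪₁ F − φ^{02} ∪₂ C(F) = 0
    (∀ (a b c d : ι) (z : Z),
      φ20 b c d z - φ20 a c d z + φ20 a b d z - φ20 a b c z
        - φ11 a b (F b c d z) z
        - ((∑ i : Fin n, ∑ j : Fin n, if i < j then g z i j *
            ((F a b c z i * F a c d z j - F b c d z i * F a b d z j : ℤ) : ℝ)
            else 0 : ℝ) : AddCircle (1 : ℝ)) = 0) := by
  have hFz (z : Z) (a b c : ι) : (fun l => (F a b c z l : ℝ)) = s b c z - s a c z + s a b z :=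
    funext (hF a b c z)
  refine ⟨fun a b z i j => by rw [hφ02, hφ02, sub_self], fun a b c m z => ?_,
    fun a b c d z => ?_⟩
  · simp only [hφ11, Matrix.sum_ite_lt_mul_sub, ← AddCircle.coe_add, ← AddCircle.coe_sub]
    rw [bilin_cocycle_two_one _ (fun a b => s a b z) _ (hFz z), AddCircle.coe_zero]
  · simp only [hφ20, hφ11, Int.cast_sub, Int.cast_mul, Matrix.sum_ite_lt_mul_sub,
      ← AddCircle.coe_sub, ← AddCircle.coe_add]
    rw [bilin_cocycle_three_zero _ (fun a b => s a b z) _ (hFz z), AddCircle.coe_zero]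

theorem stmt_10 {ι Z : Type*} [TopologicalSpace Z] {n : ℕ}
    (s : ι → ι → Z → Fin n → ℝ)
    (hs0 : ∀ (a : ι) (z : Z), s a a z = 0)
    (hscont : ∀ a b : ι, Continuous (s a b))
    (g : Z → Matrix (Fin n) (Fin n) ℝ) (hgcont : Continuous g)
    (hgu : ∀ (z : Z) (i j : Fin n), ¬ i < j → g z i j = 0)
    -- F = ∂̌s takes values in ℤⁿ
    (F : ι → ι → ι → Z → Fin n → ℤ)
    (hF : ∀ (a b c : ι) (z : Z) (l : Fin n),
      (F a b c z l : ℝ) = s b c z l - s a c z l + s a b z l)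
    (φ20 : ι → ι → ι → Z → AddCircle (1 : ℝ))
    (hφ20 : ∀ (a b c : ι) (z : Z), φ20 a b c z =
      ((∑ i : Fin n, ∑ j : Fin n, if i < j then g z i j *
          (s a b z i * s b c z j - (F a b c z i : ℝ) * s a c z j) else 0 : ℝ) :
        AddCircle (1 : ℝ)))
    (φ11 : ι → ι → (Fin n → ℤ) → Z → AddCircle (1 : ℝ))
    (hφ11 : ∀ (a b : ι) (m : Fin n → ℤ) (z : Z), φ11 a b m z =
      ((∑ i : Fin n, ∑ j : Fin n, if i < j then g z i j *
          ((m i : ℝ) * s a b z j - s a b z i * (m j : ℝ)) else 0 : ℝ) :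
        AddCircle (1 : ℝ)))
    (φ02 : ι → Z → Matrix (Fin n) (Fin n) (AddCircle (1 : ℝ)))
    (hφ02 : ∀ (a : ι) (z : Z) (i j : Fin n),
      φ02 a z i j = ((g z i j : ℝ) : AddCircle (1 : ℝ))) :
    -- degree (1,2) component of D_F φ(g): ∂̌φ^{02} = 0
    (∀ (a b : ι) (z : Z) (i j : Fin n), φ02 b z i j - φ02 a z i j = 0) ∧
    -- degree (2,1) component: ∂̌φ^{11} + φ^{02} ∪₁ F = 0
    (∀ (a b c : ι) (m : Fin n → ℤ) (z : Z),
      φ11 b c m z - φ11 a c m z + φ11 a b m z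
        + ((∑ i : Fin n, ∑ j : Fin n, if i < j then g z i j *
            ((F a b c z i : ℝ) * (m j : ℝ) - (m i : ℝ) * (F a b c z j : ℝ))
            else 0 : ℝ) : AddCircle (1 : ℝ)) = 0) ∧
    -- degree (3,0) component: ∂̌φ^{20} − φ^{11} ∪₁ F − φ^{02} ∪₂ C(F) = 0
    (∀ (a b c d : ι) (z : Z),
      φ20 b c d z - φ20 a c d z + φ20 a b d z - φ20 a b c z
        - φ11 a b (F b c d z) z
        - ((∑ i : Fin n, ∑ j : Fin n, if i < j then g z i j *
            ((F a b c z i * F a c d z j - F b c d z i * F a b d z j : ℤ) : ℝ)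
            else 0 : ℝ) : AddCircle (1 : ℝ)) = 0) :=
  stmt_10_general s g F hF φ20 hφ20 φ11 hφ11 φ02 hφ02
end

section
/- Let s be a Čech 1-cochain on a cover of Z with values in ℝ^n such that s_{λλ} = 0 and F := ∂̌s is integer-valued, and let g: Z → M_n^u(ℝ) be continuous. Then the ℝ-valued 2-cochain ψ_{λ0λ1λ2}(z) := Σ_{1≤i<j≤n} g(z)_{ij}(s_{λ0λ1}(z)_i s_{λ1λ2}(z)_j − F_{λ0λ1λ2}(z)_i s_{λ0λ2}(z)_j) satisfies: (∂̌ψ)_{λ0λ1λ2λ3}(z) − Σ_{i<j} g(z)_{ij}(F_{λ0λ1λ2}(z)_i F_{λ0λ2λ3}(z)_j − F_{λ1λ2λ3}(z)_i F_{λ0λ1λ3}(z)_j) − Σ_{i<j} g(z)_{ij}(F_{λ1λ2λ3}(z)_i s_{λ0λ1}(z)_j − s_{λ0λ1}(z)_i F_{λ1λ2λ3}(z)_j) = 0, i.e., the image of g under the composite C(Z, M_n^u(ℝ)) → ℍ²_F(W, 𝒮) → ℍ³_F(W, ℤ) vanishes at the level of the first (degree-(3,0)) component of the connecting zig-zag.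 -/
/-!
Once the integer cochain `F` is replaced by the coboundary `δs` it equals, the identity holds
coordinatewise: for the `i`-th and `j`-th coordinates `x`, `y` of `s`, the coboundary of the
2-cochain `x_ab y_bc - (δx)_abc y_ac` is a ring identity in the values of `x` and `y`, and the
theorem is its sum over `i < j` weighted by `g z i j`.
-/

namespace Cech

variable {ι R : Type*}

def coboundary₁ [AddCommGroup R] (x : ι → ι → R) (a b c : ι) : R :=
  x b c - x a c + x a b

def coboundary₂ [AddCommGroup R] (φ : ι → ι → ι → R) (a b c d : ι) : R :=
  φ b c d - φ a c d + φ a b d - φ a b c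

theorem coboundary₂_cup_sub_coboundary₁_cup [Ring R] (x y : ι → ι → R) (a b c d : ι) :
    coboundary₂ (fun a b c => x a b * y b c - coboundary₁ x a b c * y a c) a b c d =
      coboundary₁ x a b c * coboundary₁ y a c d - coboundary₁ x b c d * coboundary₁ y a b d
        + (coboundary₁ x b c d * y a b - x a b * coboundary₁ y b c d) := by
  simp only [coboundary₁, coboundary₂]
  noncomm_ring

end Cech

theorem stmt_11_general {ι Z : Type*} {n : ℕ}
    (s : ι → ι → Z → Fin n → ℝ)
    (g : Z → Matrix (Fin n) (Fin n) ℝ)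
    (F : ι → ι → ι → Z → Fin n → ℤ)
    (hF : ∀ (a b c : ι) (z : Z) (l : Fin n),
      (F a b c z l : ℝ) = s b c z l - s a c z l + s a b z l)
    (ψ : ι → ι → ι → Z → ℝ)
    (hψ : ∀ (a b c : ι) (z : Z), ψ a b c z =
      ∑ i : Fin n, ∑ j : Fin n, if i < j then g z i j *
        (s a b z i * s b c z j - (F a b c z i : ℝ) * s a c z j) else 0)
    (a b c d : ι) (z : Z) :
    (ψ b c d z - ψ a c d z + ψ a b d z - ψ a b c z)
      - (∑ i : Fin n, ∑ j : Fin n, if i < j then g z i j *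
          ((F a b c z i : ℝ) * (F a c d z j : ℝ)
            - (F b c d z i : ℝ) * (F a b d z j : ℝ)) else 0)
      - (∑ i : Fin n, ∑ j : Fin n, if i < j then g z i j *
          ((F b c d z i : ℝ) * s a b z j - s a b z i * (F b c d z j : ℝ)) else 0)
      = 0 := by
  simp only [hψ, hF, ← Finset.sum_sub_distrib, ← Finset.sum_add_distrib]
  refine Finset.sum_eq_zero fun i _ => Finset.sum_eq_zero fun j _ => ?_
  split_ifs
  · have key := Cech.coboundary₂_cup_sub_coboundary₁_cup
      (fun a b => s a b z i) (fun a b => s a b z j) a b c d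
    simp only [Cech.coboundary₁, Cech.coboundary₂] at key
    linear_combination g z i j * key
  · ring

theorem stmt_11 {ι Z : Type*} [TopologicalSpace Z] {n : ℕ}
    (s : ι → ι → Z → Fin n → ℝ)
    (hs0 : ∀ (a : ι) (z : Z), s a a z = 0)
    (hscont : ∀ a b : ι, Continuous (s a b))
    (g : Z → Matrix (Fin n) (Fin n) ℝ) (hgcont : Continuous g)
    (hgu : ∀ (z : Z) (i j : Fin n), ¬ i < j → g z i j = 0)
    (F : ι → ι → ι → Z → Fin n → ℤ)
    (hF : ∀ (a b c : ι) (z : Z) (l : Fin n),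
      (F a b c z l : ℝ) = s b c z l - s a c z l + s a b z l)
    (ψ : ι → ι → ι → Z → ℝ)
    (hψ : ∀ (a b c : ι) (z : Z), ψ a b c z =
      ∑ i : Fin n, ∑ j : Fin n, if i < j then g z i j *
        (s a b z i * s b c z j - (F a b c z i : ℝ) * s a c z j) else 0)
    (a b c d : ι) (z : Z) :
    (ψ b c d z - ψ a c d z + ψ a b d z - ψ a b c z)
      - (∑ i : Fin n, ∑ j : Fin n, if i < j then g z i j *
          ((F a b c z i : ℝ) * (F a c d z j : ℝ)
            - (F b c d z i : ℝ) * (F a b d z j : ℝ)) else 0)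
      - (∑ i : Fin n, ∑ j : Fin n, if i < j then g z i j *
          ((F b c d z i : ℝ) * s a b z j - s a b z i * (F b c d z j : ℝ)) else 0)
      = 0 :=
  stmt_11_general s g F hF ψ hψ a b c d z
end

section
/- Let g: Z → M_n^u(ℝ) be continuous and s a continuous ℝ^n-valued 1-cochain on a cover of Z with s_{λλ}=0 and F := ∂̌s integer-valued. Then the M_n^u(𝕋)-valued 1-cochain obtained as the Čech differential of z ↦ [g(z)]_{ℝ/ℤ} vanishes (since g is globally defined), and the middle-component identity holds: ∂̌φ^{11} + (φ^{02} ∪₁ F) = 0 in Č²(W, Hom(ℤ^n, 𝕋)), where φ^{11}_{λ0λ1}(m,z) := [Σ_{i<j} g(z)_{ij}(m_i s_{λ0λ1}(z)_j − s_{λ0λ1}(z)_i m_j)]_{ℝ/ℤ} and (φ^{02} ∪₁ F)_{λ0λ1λ2}(m,z) := [Σ_{i<j} g(z)_{ij}(F_{λ0λ1λ2}(z)_i m_j − m_i F_{λ0λ1λ2}(z)_j)]_{ℝ/ℤ}. -/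
/-! Pairing `m` with `s` through the strictly upper triangular part of `g` is linear in `s` and
antisymmetric, so `∂̌φ^{11}` is the pairing of `m` with `∂̌s = F`, which the antisymmetry turns into
the negative of the cup-product term. The identity thus already holds in `ℝ`, before reducing
modulo `ℤ`. -/

open Finset

section UpperPairing

variable {R : Type*} [CommRing R] {n : ℕ}

def upperPairing (g : Matrix (Fin n) (Fin n) R) (x y : Fin n → R) : R :=
  ∑ i, ∑ j, if i < j then g i j * (x i * y j - y i * x j) else 0

theorem upperPairing_swap (g : Matrix (Fin n) (Fin n) R) (x y : Fin n → R) :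
    upperPairing g y x = -upperPairing g x y := by
  simp only [upperPairing, ← sum_neg_distrib]
  refine sum_congr rfl fun i _ => sum_congr rfl fun j _ => ?_
  split_ifs <;> ring

theorem upperPairing_add_right (g : Matrix (Fin n) (Fin n) R) (x y y' : Fin n → R) :
    upperPairing g x (y + y') = upperPairing g x y + upperPairing g x y' := by
  simp only [upperPairing, ← sum_add_distrib]
  refine sum_congr rfl fun i _ => sum_congr rfl fun j _ => ?_
  split_ifs
  · simp only [Pi.add_apply]; ring
  · simp

theorem upperPairing_sub_right (g : Matrix (Fin n) (Fin n) R) (x y y' : Fin n → R) :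
    upperPairing g x (y - y') = upperPairing g x y - upperPairing g x y' := by
  simp only [upperPairing, ← sum_sub_distrib]
  refine sum_congr rfl fun i _ => sum_congr rfl fun j _ => ?_
  split_ifs
  · simp only [Pi.sub_apply]; ring
  · simp

theorem upperPairing_cech_add_swap (g : Matrix (Fin n) (Fin n) R) (x y₀₁ y₀₂ y₁₂ f : Fin n → R)
    (hf : f = y₁₂ - y₀₂ + y₀₁) :
    upperPairing g x y₁₂ - upperPairing g x y₀₂ + upperPairing g x y₀₁
      + upperPairing g f x = 0 := by
  rw [upperPairing_swap g x f, hf, upperPairing_add_right, upperPairing_sub_right, add_neg_cancel]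

end UpperPairing

theorem stmt_18_general {ι Z : Type*} {n : ℕ}
    (s : ι → ι → Z → Fin n → ℝ)
    (g : Z → Matrix (Fin n) (Fin n) ℝ)
    (F : ι → ι → ι → Z → Fin n → ℤ)
    (hF : ∀ (a b c : ι) (z : Z) (l : Fin n),
      (F a b c z l : ℝ) = s b c z l - s a c z l + s a b z l)
    (φ02 : ι → Z → Matrix (Fin n) (Fin n) (AddCircle (1 : ℝ)))
    (hφ02 : ∀ (a : ι) (z : Z) (i j : Fin n),
      φ02 a z i j = ((g z i j : ℝ) : AddCircle (1 : ℝ)))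
    (φ11 : ι → ι → (Fin n → ℤ) → Z → AddCircle (1 : ℝ))
    (hφ11 : ∀ (a b : ι) (m : Fin n → ℤ) (z : Z), φ11 a b m z =
      ((∑ i : Fin n, ∑ j : Fin n, if i < j then g z i j *
          ((m i : ℝ) * s a b z j - s a b z i * (m j : ℝ)) else 0 : ℝ) :
        AddCircle (1 : ℝ))) :
    -- ∂̌ of the global 0-cochain [g] vanishes
    (∀ (a b : ι) (z : Z) (i j : Fin n), φ02 b z i j - φ02 a z i j = 0) ∧
    -- ∂̌φ^{11} + φ^{02} ∪₁ F = 0 in Č²(W, Hom(ℤⁿ, 𝕋))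
    (∀ (a b c : ι) (m : Fin n → ℤ) (z : Z),
      φ11 b c m z - φ11 a c m z + φ11 a b m z
        + ((∑ i : Fin n, ∑ j : Fin n, if i < j then g z i j *
            ((F a b c z i : ℝ) * (m j : ℝ) - (m i : ℝ) * (F a b c z j : ℝ))
            else 0 : ℝ) : AddCircle (1 : ℝ)) = 0) := by
  refine ⟨fun a b z i j => by rw [hφ02, hφ02, sub_self], fun a b c m z => ?_⟩
  have hreal := upperPairing_cech_add_swap (g z) (fun l => (m l : ℝ)) (s a b z) (s a c z)
    (s b c z) (fun l => (F a b c z l : ℝ)) (funext (hF a b c z))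
  rw [hφ11, hφ11, hφ11]
  unfold upperPairing at hreal
  rw [← QuotientAddGroup.mk_sub, ← QuotientAddGroup.mk_add, ← QuotientAddGroup.mk_add, hreal,
    QuotientAddGroup.mk_zero]

theorem stmt_18 {ι Z : Type*} [TopologicalSpace Z] {n : ℕ}
    (s : ι → ι → Z → Fin n → ℝ)
    (hs0 : ∀ (a : ι) (z : Z), s a a z = 0)
    (hscont : ∀ a b : ι, Continuous (s a b))
    (g : Z → Matrix (Fin n) (Fin n) ℝ) (hgcont : Continuous g)
    (hgu : ∀ (z : Z) (i j : Fin n), ¬ i < j → g z i j = 0)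
    (F : ι → ι → ι → Z → Fin n → ℤ)
    (hF : ∀ (a b c : ι) (z : Z) (l : Fin n),
      (F a b c z l : ℝ) = s b c z l - s a c z l + s a b z l)
    (φ02 : ι → Z → Matrix (Fin n) (Fin n) (AddCircle (1 : ℝ)))
    (hφ02 : ∀ (a : ι) (z : Z) (i j : Fin n),
      φ02 a z i j = ((g z i j : ℝ) : AddCircle (1 : ℝ)))
    (φ11 : ι → ι → (Fin n → ℤ) → Z → AddCircle (1 : ℝ))
    (hφ11 : ∀ (a b : ι) (m : Fin n → ℤ) (z : Z), φ11 a b m z =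
      ((∑ i : Fin n, ∑ j : Fin n, if i < j then g z i j *
          ((m i : ℝ) * s a b z j - s a b z i * (m j : ℝ)) else 0 : ℝ) :
        AddCircle (1 : ℝ))) :
    -- ∂̌ of the global 0-cochain [g] vanishes
    (∀ (a b : ι) (z : Z) (i j : Fin n), φ02 b z i j - φ02 a z i j = 0) ∧
    -- ∂̌φ^{11} + φ^{02} ∪₁ F = 0 in Č²(W, Hom(ℤⁿ, 𝕋))
    (∀ (a b c : ι) (m : Fin n → ℤ) (z : Z),
      φ11 b c m z - φ11 a c m z + φ11 a b m z
        + ((∑ i : Fin n, ∑ j : Fin n, if i < j then g z i j *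
            ((F a b c z i : ℝ) * (m j : ℝ) - (m i : ℝ) * (F a b c z j : ℝ))
            else 0 : ℝ) : AddCircle (1 : ℝ)) = 0) :=
  stmt_18_general s g F hF φ02 hφ02 φ11 hφ11
end
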